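/- For i = 1, 2 let (α_i, μ_i, ν_i, η_i) ∈ ℝ⁴ satisfy |3μ_i + 3ν_i − α_i| ≤ 3 and 3 − 2α_i − α_i² + 6(1 − α_i)(μ_i + ν_i) − 9(μ_i − ν_i)² − 9η_i² ≥ 0. Then 1/4 − (α₂μ₁ + α₁ν₂)/8 ≤ 5/8, and the value 5/8 is attained for some parameters satisfying the constraints. -/
import Mathlib


/-- The complete-positivity constraints for a general SU(2)-covariant map
`Λ : M₂ ⊗ M₂ → M₂` with parameters `(α, μ, ν, η)`:
`|3μ + 3ν − α| ≤ 3` and `3 − 2α − α² + 6(1 − α)(μ + ν) − 9(μ − ν)² − 9η² ≥ 0`. -/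
def SU2CovariantCP (α μ ν η : ℝ) : Prop :=
  |3 * μ + 3 * ν - α| ≤ 3 ∧
  3 - 2 * α - α ^ 2 + 6 * (1 - α) * (μ + ν) - 9 * (μ - ν) ^ 2 - 9 * η ^ 2 ≥ 0

namespace SingletAux

/-- α is at least −3. -/
lemma a_lb (a m n e : ℝ) (h1a : 3*m+3*n-a ≤ 3) (h1b : -3 ≤ 3*m+3*n-a)
    (h2 : 3 - 2*a - a^2 + 6*(1-a)*(m+n) - 9*(m-n)^2 - 9*e^2 ≥ 0) :
    -3 ≤ a := by
  nlinarith [sq_nonneg (m-n), sq_nonneg e, sq_nonneg (a+3), sq_nonneg (a-1),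
    mul_nonneg (sub_nonneg.2 h1a) (sub_nonneg.2 h1a)]

/-- α is at most 1. -/
lemma a_ub (a m n e : ℝ) (h1a : 3*m+3*n-a ≤ 3) (h1b : -3 ≤ 3*m+3*n-a)
    (h2 : 3 - 2*a - a^2 + 6*(1-a)*(m+n) - 9*(m-n)^2 - 9*e^2 ≥ 0) :
    a ≤ 1 := by
  nlinarith [sq_nonneg (m-n), sq_nonneg e, sq_nonneg (a+3), sq_nonneg (a-1)]

/-- μ is at least −1/3. -/
lemma m_lb (a m n e : ℝ) (h1a : 3*m+3*n-a ≤ 3) (h1b : -3 ≤ 3*m+3*n-a)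
    (h2 : 3 - 2*a - a^2 + 6*(1-a)*(m+n) - 9*(m-n)^2 - 9*e^2 ≥ 0) :
    -(1/3) ≤ m := by
  have ha1 : a ≤ 1 := a_ub a m n e h1a h1b h2
  have key : 12*(1-a)*(m+1/3) ≥ 0 := by nlinarith [sq_nonneg (3*(m-n)+1-a), sq_nonneg e]
  rcases lt_or_eq_of_le ha1 with h | h
  · nlinarith [key, mul_pos (by linarith : (0:ℝ) < 1 - a) (by linarith : (0:ℝ) < 1 - a)]
  · subst h
    have h3 : (m-n)^2 ≤ 0 := by nlinarith [sq_nonneg e]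
    have h4 : m - n = 0 := by
      have := le_antisymm h3 (sq_nonneg (m-n))
      exact pow_eq_zero_iff (by norm_num) |>.mp this
    linarith

/-- μ is at most 1. -/
lemma m_ub (a m n e : ℝ) (h1a : 3*m+3*n-a ≤ 3) (h1b : -3 ≤ 3*m+3*n-a)
    (h2 : 3 - 2*a - a^2 + 6*(1-a)*(m+n) - 9*(m-n)^2 - 9*e^2 ≥ 0) :
    m ≤ 1 := by
  have ha1 : a ≤ 1 := a_ub a m n e h1a h1b h2
  have hm13 : -(1/3) ≤ m := m_lb a m n e h1a h1b h2
  nlinarith [sq_nonneg e, sq_nonneg a,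
    mul_nonneg (by linarith : (0:ℝ) ≤ 1-a) (by linarith : (0:ℝ) ≤ 3 - (3*m+3*n-a)),
    mul_nonneg (by linarith : (0:ℝ) ≤ 3 - (3*m+3*n-a)) (by linarith : (0:ℝ) ≤ m + 1/3)]

/-- Quadratic coupling between α and μ, on the upper branch. -/
lemma coupling_upper (a m n e : ℝ) (h1a : 3*m+3*n-a ≤ 3) (h1b : -3 ≤ 3*m+3*n-a)
    (h2 : 3 - 2*a - a^2 + 6*(1-a)*(m+n) - 9*(m-n)^2 - 9*e^2 ≥ 0)
    (hE : 3 + a ≤ 6*m) :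
    (6*m-3-a)^2 ≤ 9 - 6*a - 3*a^2 := by
  have ha1 : a ≤ 1 := a_ub a m n e h1a h1b h2
  nlinarith [sq_nonneg e, sq_nonneg (m-n),
    mul_nonneg (by linarith : (0:ℝ) ≤ 1-a) (by linarith : (0:ℝ) ≤ 3 - (3*m+3*n-a)),
    mul_nonneg (by linarith : (0:ℝ) ≤ 3 - (3*m+3*n-a)) (by linarith : (0:ℝ) ≤ 6*m-3-a)]

/-- Quadratic coupling between α and μ when α ≤ −2 (both branches). -/
lemma coupling_low (a m n e : ℝ) (h1a : 3*m+3*n-a ≤ 3) (h1b : -3 ≤ 3*m+3*n-a)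
    (h2 : 3 - 2*a - a^2 + 6*(1-a)*(m+n) - 9*(m-n)^2 - 9*e^2 ≥ 0)
    (ha2 : a ≤ -2) :
    (6*m-3-a)^2 ≤ 9 - 6*a - 3*a^2 := by
  have ha1 : a ≤ 1 := a_ub a m n e h1a h1b h2
  have ha : -3 ≤ a := a_lb a m n e h1a h1b h2
  nlinarith [sq_nonneg e, sq_nonneg (m-n), sq_nonneg (3*m-3*n+1-a), sq_nonneg (3*m-3*n-(3-a)),
    mul_nonneg (by linarith : (0:ℝ) ≤ 1-a) (by linarith : (0:ℝ) ≤ 3 - (3*m+3*n-a)),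
    mul_nonneg (by linarith : (0:ℝ) ≤ -2-a) (by linarith : (0:ℝ) ≤ 3 - (3*m+3*n-a)),
    mul_nonneg (by linarith : (0:ℝ) ≤ -2-a) (by linarith : (0:ℝ) ≤ (3*m+3*n-a) + 3),
    mul_nonneg (by linarith : (0:ℝ) ≤ a+3) (by linarith : (0:ℝ) ≤ 3 - (3*m+3*n-a))]

/-- Mixed case: `(a,x)` in the linear box (`6x ≤ 3+a`, `a ≥ −2`), while `(b,y)` satisfies the
quadratic coupling. -/
lemma mixed (a b x y : ℝ)
    (ha : -3 ≤ a) (ha1 : a ≤ 1) (hb : -3 ≤ b) (hb1 : b ≤ 1)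
    (hx0 : -(1/3) ≤ x) (hx1 : x ≤ 1) (hy0 : -(1/3) ≤ y) (hy1 : y ≤ 1)
    (hxa : 6*x ≤ 3 + a) (ha2 : -2 ≤ a)
    (q2 : (6*y-3-b)^2 ≤ 9 - 6*b - 3*b^2) :
    0 ≤ b*x + a*y + 3 := by
  rcases le_or_gt b 0 with hbs | hbs
  · nlinarith [mul_nonneg (by linarith : (0:ℝ) ≤ -b) (by linarith : (0:ℝ) ≤ 3 + a - 6*x),
      sq_nonneg (a + (6*y-3-b)), sq_nonneg (a+b+3),
      mul_nonneg (by linarith : (0:ℝ) ≤ a+2) (by linarith : (0:ℝ) ≤ -b),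
      mul_nonneg (by linarith : (0:ℝ) ≤ a+2) (by linarith : (0:ℝ) ≤ b+3),
      mul_nonneg (by linarith : (0:ℝ) ≤ 1-a) (by linarith : (0:ℝ) ≤ -b),
      mul_nonneg (by linarith : (0:ℝ) ≤ 1-a) (by linarith : (0:ℝ) ≤ b+3)]
  · rcases le_or_gt 0 a with has | has
    · nlinarith [mul_nonneg hbs.le (by linarith : (0:ℝ) ≤ x + 1/3),
        mul_nonneg has (by linarith : (0:ℝ) ≤ y + 1/3)]
    · nlinarith [mul_nonneg hbs.le (by linarith : (0:ℝ) ≤ x + 1/3),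
        mul_nonneg (by linarith : (0:ℝ) ≤ -a) (by linarith : (0:ℝ) ≤ 1 - y)]

/-- Main combination lemma: box bounds plus the two conditional quadratic couplings give
`bx + ay + 3 ≥ 0`. -/
lemma key (a b x y : ℝ)
    (ha : -3 ≤ a) (ha1 : a ≤ 1) (hb : -3 ≤ b) (hb1 : b ≤ 1)
    (hx0 : -(1/3) ≤ x) (hx1 : x ≤ 1) (hy0 : -(1/3) ≤ y) (hy1 : y ≤ 1)
    (hQx : (3 + a ≤ 6*x ∨ a ≤ -2) → (6*x-3-a)^2 ≤ 9 - 6*a - 3*a^2)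
    (hQy : (3 + b ≤ 6*y ∨ b ≤ -2) → (6*y-3-b)^2 ≤ 9 - 6*b - 3*b^2) :
    0 ≤ b*x + a*y + 3 := by
  by_cases P1 : 3 + a ≤ 6*x ∨ a ≤ -2
  · by_cases P2 : 3 + b ≤ 6*y ∨ b ≤ -2
    · have q1 := hQx P1
      have q2 := hQy P2
      nlinarith [q1, q2, sq_nonneg (b + (6*x-3-a)), sq_nonneg (a + (6*y-3-b)), sq_nonneg (a+b+3)]
    · push_neg at P2
      have := mixed b a y x hb hb1 ha ha1 hy0 hy1 hx0 hx1 (by linarith [P2.1]) (by linarith [P2.2]) (hQx P1)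
      linarith
  · push_neg at P1
    by_cases P2 : 3 + b ≤ 6*y ∨ b ≤ -2
    · exact mixed a b x y ha ha1 hb hb1 hx0 hx1 hy0 hy1 (by linarith [P1.1]) (by linarith [P1.2]) (hQy P2)
    · push_neg at P2
      rcases le_or_gt b 0 with hbs | hbs <;> rcases le_or_gt 0 a with has | has
      · nlinarith [mul_nonneg (by linarith [P2.2] : (0:ℝ) ≤ b+2) (by linarith [P1.1] : (0:ℝ) ≤ 3+a-6*x),
          mul_nonneg has (by linarith : (0:ℝ) ≤ y + 1/3)]
      · nlinarith [mul_nonneg (by linarith [P2.2] : (0:ℝ) ≤ b+2) (by linarith [P1.1] : (0:ℝ) ≤ 3+a-6*x),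
          mul_nonneg (by linarith [P1.2] : (0:ℝ) ≤ a+2) (by linarith [P2.1] : (0:ℝ) ≤ 3+b-6*y)]
      · nlinarith [mul_nonneg hbs.le (by linarith : (0:ℝ) ≤ x + 1/3),
          mul_nonneg has (by linarith : (0:ℝ) ≤ y + 1/3)]
      · nlinarith [mul_nonneg hbs.le (by linarith : (0:ℝ) ≤ x + 1/3),
          mul_nonneg (by linarith [P1.2] : (0:ℝ) ≤ a+2) (by linarith [P2.1] : (0:ℝ) ≤ 3+b-6*y)]

end SingletAux

/-- For two SU(2)-covariant maps with parameters `(α_i, μ_i, ν_i, η_i)`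
satisfying the complete-positivity constraints, the singlet expectation
`1/4 − (α₂μ₁ + α₁ν₂)/8` of the equal-weight average of the two period-2 processes is at
most `5/8`, and the value `5/8` is attained for some admissible parameters. -/
theorem singlet_bound_period_two :
    (∀ α₁ μ₁ ν₁ η₁ α₂ μ₂ ν₂ η₂ : ℝ,
      SU2CovariantCP α₁ μ₁ ν₁ η₁ → SU2CovariantCP α₂ μ₂ ν₂ η₂ →
      1 / 4 - (α₂ * μ₁ + α₁ * ν₂) / 8 ≤ 5 / 8) ∧
    (∃ α₁ μ₁ ν₁ η₁ α₂ μ₂ ν₂ η₂ : ℝ,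
      SU2CovariantCP α₁ μ₁ ν₁ η₁ ∧ SU2CovariantCP α₂ μ₂ ν₂ η₂ ∧
      1 / 4 - (α₂ * μ₁ + α₁ * ν₂) / 8 = 5 / 8) := by
  constructor
  · intro α₁ μ₁ ν₁ η₁ α₂ μ₂ ν₂ η₂ hC1 hC2
    obtain ⟨habs1, hq1⟩ := hC1
    obtain ⟨habs2, hq2⟩ := hC2
    rw [abs_le] at habs1 habs2
    -- map 1 facts, for (α₁, μ₁)
    have h1a : 3*μ₁+3*ν₁-α₁ ≤ 3 := by linarith [habs1.2]
    have h1b : -3 ≤ 3*μ₁+3*ν₁-α₁ := by linarith [habs1.1]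
    have h1q : 3 - 2*α₁ - α₁^2 + 6*(1-α₁)*(μ₁+ν₁) - 9*(μ₁-ν₁)^2 - 9*η₁^2 ≥ 0 := by nlinarith [hq1]
    -- map 2 facts, written for (α₂, ν₂) by swapping the roles of μ₂ and ν₂
    have h2a : 3*ν₂+3*μ₂-α₂ ≤ 3 := by linarith [habs2.2]
    have h2b : -3 ≤ 3*ν₂+3*μ₂-α₂ := by linarith [habs2.1]
    have h2q : 3 - 2*α₂ - α₂^2 + 6*(1-α₂)*(ν₂+μ₂) - 9*(ν₂-μ₂)^2 - 9*η₂^2 ≥ 0 := by nlinarith [hq2]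
    have ha := SingletAux.a_lb α₁ μ₁ ν₁ η₁ h1a h1b h1q
    have ha1 := SingletAux.a_ub α₁ μ₁ ν₁ η₁ h1a h1b h1q
    have hb := SingletAux.a_lb α₂ ν₂ μ₂ η₂ h2a h2b h2q
    have hb1 := SingletAux.a_ub α₂ ν₂ μ₂ η₂ h2a h2b h2q
    have hx0 := SingletAux.m_lb α₁ μ₁ ν₁ η₁ h1a h1b h1q
    have hx1 := SingletAux.m_ub α₁ μ₁ ν₁ η₁ h1a h1b h1q
    have hy0 := SingletAux.m_lb α₂ ν₂ μ₂ η₂ h2a h2b h2q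
    have hy1 := SingletAux.m_ub α₂ ν₂ μ₂ η₂ h2a h2b h2q
    have hQx : (3 + α₁ ≤ 6*μ₁ ∨ α₁ ≤ -2) → (6*μ₁-3-α₁)^2 ≤ 9 - 6*α₁ - 3*α₁^2 := by
      rintro (h | h)
      · exact SingletAux.coupling_upper α₁ μ₁ ν₁ η₁ h1a h1b h1q h
      · exact SingletAux.coupling_low α₁ μ₁ ν₁ η₁ h1a h1b h1q h
    have hQy : (3 + α₂ ≤ 6*ν₂ ∨ α₂ ≤ -2) → (6*ν₂-3-α₂)^2 ≤ 9 - 6*α₂ - 3*α₂^2 := by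
      rintro (h | h)
      · exact SingletAux.coupling_upper α₂ ν₂ μ₂ η₂ h2a h2b h2q h
      · exact SingletAux.coupling_low α₂ ν₂ μ₂ η₂ h2a h2b h2q h
    have := SingletAux.key α₁ α₂ μ₁ ν₂ ha ha1 hb hb1 hx0 hx1 hy0 hy1 hQx hQy
    linarith
  · refine ⟨-3, 0, 0, 0, 0, 0, 1, 0, ⟨?_, ?_⟩, ⟨?_, ?_⟩, by norm_num⟩
    · rw [abs_le]; norm_num
    · norm_num
    · rw [abs_le]; norm_num
    · norm_num
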